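/- The polynomial p(z) = (−z⁶ + 6z⁴ + 4z³ − 9z² − 12z + 4)/8 is a Shabat polynomial in Zapponi form: every critical value of p lies in {1, −1} (explicitly, its derivative is proportional to (z−1)(z+1)³(z−2), with p(1) = −1, p(−1) = 1, and p(2) = 1), the sum of the distinct complex roots of p − 1 equals 1, and the sum of the distinct complex roots of p + 1 equals −1. -/

import Mathlib

/-!
The polynomial factors as `p - 1 = -(z + 1)⁴ (z - 2)² / 8` and `p + 1 = -(z - 1)² q / 8` with
`q = z⁴ + 2z³ - 3z² - 12z - 12`, and its critical points `1, -1, 2` are exactly the multiple roots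
of `p ∓ 1`, so every critical value is `±1`. The distinct roots of `p - 1` are `-1, 2`;
those of `p + 1` are `1` together with the roots of `q`, which is separable with `q(1) ≠ 0`,
so they sum to `1 + (-2)` by Vieta.
-/

open Polynomial

noncomputable def pSZ : Polynomial ℂ :=
  Polynomial.C (1 / 8 : ℂ) *
    (-Polynomial.X ^ 6 + 6 * Polynomial.X ^ 4 + 4 * Polynomial.X ^ 3 -
      9 * Polynomial.X ^ 2 - 12 * Polynomial.X + 4)

theorem Polynomial.sum_roots_toFinset_of_separable {R : Type*} [CommRing R] [IsDomain R]
    [DecidableEq R] {p : R[X]} (hp : p.Splits) (hm : p.Monic) (hs : p.Separable) :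
    ∑ x ∈ p.roots.toFinset, x = -p.nextCoeff := by
  rw [hp.nextCoeff_eq_neg_sum_roots_of_monic hm, neg_neg, Finset.sum,
    Multiset.toFinset_val, (nodup_roots hs).dedup, Multiset.map_id']

noncomputable def qSZ : ℂ[X] := X ^ 4 + 2 * X ^ 3 - 3 * X ^ 2 - 12 * X - 12

theorem derivative_pSZ : derivative pSZ = C (-3 / 4 : ℂ) * (X - 1) * (X + 1) ^ 3 * (X - 2) :=
  Polynomial.funext fun z => by simp [pSZ]; ring

theorem pSZ_sub_one : pSZ - 1 = C (-1 / 8 : ℂ) * ((X + 1) ^ 4 * (X - 2) ^ 2) :=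
  Polynomial.funext fun z => by simp [pSZ]; ring

theorem pSZ_add_one : pSZ + 1 = C (-1 / 8 : ℂ) * ((X - 1) ^ 2 * qSZ) :=
  Polynomial.funext fun z => by simp [pSZ, qSZ]; ring

theorem monic_qSZ : qSZ.Monic := by
  unfold qSZ; monicity!

theorem separable_qSZ : qSZ.Separable := by
  refine ⟨C (1 / 96 : ℂ) * (-4 * X ^ 2 + 10 * X - 10),
    C (1 / 96 : ℂ) * (X ^ 3 - 2 * X ^ 2 - X + 2), Polynomial.funext fun z => ?_⟩
  simp [qSZ]; ring

theorem nextCoeff_qSZ : qSZ.nextCoeff = 2 := by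
  rw [nextCoeff, show qSZ.natDegree = 4 by unfold qSZ; compute_degree!]
  simp [qSZ, coeff_X_pow, coeff_X]

theorem roots_toFinset_pSZ_sub_one : (pSZ - 1).roots.toFinset = {-1, 2} := by
  have hne : pSZ - 1 ≠ 0 := fun h => by
    have h0 := congrArg (eval 0) h
    norm_num [pSZ] at h0
  ext z
  rw [Multiset.mem_toFinset, mem_roots hne, IsRoot.def, pSZ_sub_one]
  simp [sub_eq_zero, add_eq_zero_iff_eq_neg]

theorem roots_toFinset_pSZ_add_one :
    (pSZ + 1).roots.toFinset = insert 1 qSZ.roots.toFinset := by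
  have hne : pSZ + 1 ≠ 0 := fun h => by
    have h0 := congrArg (eval 0) h
    norm_num [pSZ] at h0
  ext z
  rw [Multiset.mem_toFinset, mem_roots hne, IsRoot.def, pSZ_add_one]
  simp [sub_eq_zero, monic_qSZ.ne_zero]

theorem sum_roots_toFinset_pSZ_sub_one : ∑ x ∈ (pSZ - 1).roots.toFinset, x = 1 := by
  rw [roots_toFinset_pSZ_sub_one]
  norm_num

theorem sum_roots_toFinset_pSZ_add_one : ∑ x ∈ (pSZ + 1).roots.toFinset, x = -1 := by
  have h1 : (1 : ℂ) ∉ qSZ.roots.toFinset := by norm_num [qSZ]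
  rw [roots_toFinset_pSZ_add_one, Finset.sum_insert h1,
    sum_roots_toFinset_of_separable (IsAlgClosed.splits _) monic_qSZ separable_qSZ, nextCoeff_qSZ]
  norm_num

/-- `p(z) = (−z⁶ + 6z⁴ + 4z³ − 9z² − 12z + 4)/8` is a Shabat polynomial in Zapponi
form: its derivative is proportional to `(z−1)(z+1)³(z−2)`, with `p(1) = −1`,
`p(−1) = 1` and `p(2) = 1`; every critical value lies in `{1, -1}`, and the sums
of the distinct roots of `p - 1` and `p + 1` are `1` and `-1` respectively. -/
theorem pSZ_is_shabat_zapponi :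
    Polynomial.derivative pSZ =
      Polynomial.C (-3 / 4 : ℂ) * (Polynomial.X - 1) *
        (Polynomial.X + 1) ^ 3 * (Polynomial.X - 2) ∧
    pSZ.eval (1 : ℂ) = -1 ∧ pSZ.eval (-1 : ℂ) = 1 ∧ pSZ.eval (2 : ℂ) = 1 ∧
    (∀ z : ℂ, (Polynomial.derivative pSZ).eval z = 0 →
      pSZ.eval z = 1 ∨ pSZ.eval z = -1) ∧
    ((pSZ - 1).roots.toFinset.sum id) = 1 ∧
    ((pSZ + 1).roots.toFinset.sum id) = -1 := by
  have h1 : pSZ.eval 1 = -1 := by norm_num [pSZ]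
  have hm1 : pSZ.eval (-1) = 1 := by norm_num [pSZ]
  have h2 : pSZ.eval 2 = 1 := by norm_num [pSZ]
  refine ⟨derivative_pSZ, h1, hm1, h2, fun z hz => ?_, sum_roots_toFinset_pSZ_sub_one,
    sum_roots_toFinset_pSZ_add_one⟩
  have hcrit : z = 1 ∨ z = -1 ∨ z = 2 := by
    simpa [derivative_pSZ, sub_eq_zero, add_eq_zero_iff_eq_neg, or_assoc] using hz
  rcases hcrit with rfl | rfl | rfl <;> simp [h1, hm1, h2]
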